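/- Let m ≥ 2 and let C be a normalized symmetric conference matrix of order 4m+2. Let c_A and c_B be complex numbers of absolute value 1 with Re(c_A) = (−1 + √(4m+1))/(4m) and Re(c_B) = (−1 − √(4m+1))/(4m), and let W_A (resp. W_B) be the (4m+1)×(4m+1) matrix obtained by discarding the first row and column of C, replacing the diagonal 0s with 1, the off-diagonal 1s with c_A (resp. c_B), and the off-diagonal −1s with conj(c_A) (resp. conj(c_B)). Then the complex Hadamard matrices W_A and W_B are not equivalent. -/

import Mathlib

/-!
The Haagerup set `{h i j * h k l * conj (h i l) * conj (h k j)}` of a complex Hadamard matrix is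
invariant under equivalence, since the unimodular diagonal factors cancel in each such product.
Every entry of `W_B` is `c_B ^ e` with `|e| ≤ 1`, so its Haagerup set consists of powers `c_B ^ e`
with `|e| ≤ 4`. Orthogonality of the first two rows of `C` and symmetry produce an index
`j ∉ {0, 1}` with `C 1 j = C j 1 = 1`, and the corresponding quadruple puts `c_A ^ 2` into
the Haagerup set of `W_A`.
Finally `Re (c_B ^ e) = T_e (Re c_B)` for the Chebyshev polynomials `T_e`, and the prescribed real
parts, `0 < Re c_A ≤ 1/4`, `-1/2 ≤ Re c_B < 0` and `Re c_A < -Re c_B`, separate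
`Re (c_A ^ 2) = 2 (Re c_A) ^ 2 - 1` from `T_k (Re c_B)` for every `k ≤ 4`.
-/

open Matrix

/-- Equivalence of complex Hadamard matrices: `H = P₁ D₁ K D₂ P₂` with permutation
matrices `P₁, P₂` and unitary diagonal matrices `D₁, D₂`. -/
def HadEquiv {n : Type*} [Fintype n] [DecidableEq n] (H K : Matrix n n ℂ) : Prop :=
  ∃ (σ τ : Equiv.Perm n) (d₁ d₂ : n → ℂ),
    (∀ i, ‖d₁ i‖ = 1) ∧ (∀ i, ‖d₂ i‖ = 1) ∧
    H = σ.permMatrix ℂ * Matrix.diagonal d₁ * K * Matrix.diagonal d₂ * τ.permMatrix ℂ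

/-- `C` is a conference matrix of order `n`: zero diagonal, `±1` off the
diagonal, and `C Cᵀ = (n-1) I`. -/
def IsConference {n : ℕ} (C : Matrix (Fin n) (Fin n) ℝ) : Prop :=
  (∀ i, C i i = 0) ∧ (∀ i j, i ≠ j → C i j = 1 ∨ C i j = -1) ∧
    C * C.transpose = ((n : ℝ) - 1) • 1

/-- A conference matrix is normalized if all off-diagonal entries of its first
row and first column equal `1`. -/
def IsNormalizedConf {n : ℕ} [NeZero n] (C : Matrix (Fin n) (Fin n) ℝ) : Prop :=
  ∀ j, j ≠ 0 → C 0 j = 1 ∧ C j 0 = 1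

open Polynomial Polynomial.Chebyshev ComplexConjugate

theorem Equiv.Perm.permMatrix_mul_mul_permMatrix_apply {n R : Type*} [DecidableEq n]
    [Fintype n] [NonAssocSemiring R] (σ τ : Equiv.Perm n) (M : Matrix n n R) (i j : n) :
    (σ.permMatrix R * M * τ.permMatrix R) i j = M (σ i) (τ.symm j) := by
  rw [Equiv.Perm.permMatrix, Equiv.Perm.permMatrix, PEquiv.toMatrix_toPEquiv_mul,
    PEquiv.mul_toMatrix_toPEquiv]
  rfl

def haagerupSet {n : Type*} (H : Matrix n n ℂ) : Set ℂ :=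
  {z | ∃ i j k l, z = H i j * H k l * conj (H i l) * conj (H k j)}

theorem HadEquiv.haagerupSet_subset {n : Type*} [Fintype n] [DecidableEq n]
    {H K : Matrix n n ℂ} (h : HadEquiv H K) : haagerupSet H ⊆ haagerupSet K := by
  obtain ⟨σ, τ, d₁, d₂, hd₁, hd₂, rfl⟩ := h
  have hentry : ∀ i j, (σ.permMatrix ℂ * diagonal d₁ * K * diagonal d₂ * τ.permMatrix ℂ) i j
      = d₁ (σ i) * K (σ i) (τ.symm j) * d₂ (τ.symm j) := by
    intro i j
    rw [show σ.permMatrix ℂ * diagonal d₁ * K * diagonal d₂ * τ.permMatrix ℂ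
        = σ.permMatrix ℂ * (diagonal d₁ * K * diagonal d₂) * τ.permMatrix ℂ by
          simp only [mul_assoc],
      Equiv.Perm.permMatrix_mul_mul_permMatrix_apply, mul_diagonal, diagonal_mul]
  rintro _ ⟨i, j, k, l, rfl⟩
  refine ⟨σ i, τ.symm j, σ k, τ.symm l, ?_⟩
  simp only [hentry, map_mul]
  calc _ = (d₁ (σ i) * conj (d₁ (σ i))) * (d₁ (σ k) * conj (d₁ (σ k)))
        * (d₂ (τ.symm j) * conj (d₂ (τ.symm j))) * (d₂ (τ.symm l) * conj (d₂ (τ.symm l)))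
        * (K (σ i) (τ.symm j) * K (σ k) (τ.symm l)
          * conj (K (σ i) (τ.symm l)) * conj (K (σ k) (τ.symm j))) := by ring
    _ = _ := by simp [Complex.mul_conj', hd₁, hd₂]

noncomputable def confPhaseMatrix {n : Type*} [DecidableEq n] (S : Matrix n n ℝ) (c : ℂ) :
    Matrix n n ℂ :=
  Matrix.of fun i j => if i = j then 1 else if S i j = 1 then c else conj c

section confPhaseMatrix

variable {n : Type*} [DecidableEq n] (S : Matrix n n ℝ) {c : ℂ}

theorem confPhaseMatrix_apply_eq_zpow (hc : ‖c‖ = 1) (i j : n) :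
    ∃ e : ℤ, |e| ≤ 1 ∧ confPhaseMatrix S c i j = c ^ e := by
  simp only [confPhaseMatrix, of_apply]
  split_ifs
  · exact ⟨0, by norm_num, by simp⟩
  · exact ⟨1, by norm_num, by simp⟩
  · exact ⟨-1, by norm_num, by simp [_root_.zpow_neg, Complex.inv_eq_conj hc]⟩

theorem haagerupSet_confPhaseMatrix_subset (hc : ‖c‖ = 1) :
    haagerupSet (confPhaseMatrix S c) ⊆ {z | ∃ e : ℤ, |e| ≤ 4 ∧ z = c ^ e} := by
  have hc0 : c ≠ 0 := by rintro rfl; simp at hc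
  have hconj : ∀ e : ℤ, conj (c ^ e) = c ^ (-e) := fun e => by
    rw [map_zpow₀, ← Complex.inv_eq_conj hc, _root_.inv_zpow']
  rintro _ ⟨i, j, k, l, rfl⟩
  obtain ⟨e₁, he₁, h₁⟩ := confPhaseMatrix_apply_eq_zpow S hc i j
  obtain ⟨e₂, he₂, h₂⟩ := confPhaseMatrix_apply_eq_zpow S hc k l
  obtain ⟨e₃, he₃, h₃⟩ := confPhaseMatrix_apply_eq_zpow S hc i l
  obtain ⟨e₄, he₄, h₄⟩ := confPhaseMatrix_apply_eq_zpow S hc k j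
  refine ⟨e₁ + e₂ - e₃ - e₄, ?_, ?_⟩
  · rw [abs_le] at *; omega
  · rw [h₁, h₂, h₃, h₄, hconj, hconj, ← zpow_add₀ hc0, ← zpow_add₀ hc0, ← zpow_add₀ hc0]
    ring_nf

theorem sq_mem_haagerupSet_confPhaseMatrix {i j : n} (hij : i ≠ j) (hSij : S i j = 1)
    (hSji : S j i = 1) : c ^ 2 ∈ haagerupSet (confPhaseMatrix S c) :=
  ⟨i, j, j, i, by simp [confPhaseMatrix, hij, hij.symm, hSij, hSji, sq]⟩

end confPhaseMatrix

theorem IsConference.exists_apply_eq_one {n : ℕ} [NeZero n] {C : Matrix (Fin n) (Fin n) ℝ}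
    (hC : IsConference C) (hN : IsNormalizedConf C) (hn : 2 < n) {i : Fin n} (hi : i ≠ 0) :
    ∃ j, j ≠ 0 ∧ j ≠ i ∧ C i j = 1 := by
  by_contra! hno
  have horth : ∑ j, C 0 j * C i j = 0 := by
    simpa [Matrix.mul_apply, Matrix.one_apply, hi.symm] using congrFun (congrFun hC.2.2 0) i
  have hterm : ∀ j, C 0 j * C i j = (if j = 0 then 1 else 0) + (if j = i then 1 else 0) - 1 := by
    intro j
    by_cases hj0 : j = 0
    · subst hj0; simp [hC.1, hi.symm]
    by_cases hji : j = i
    · subst hji; simp [hC.1, hi]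
    rcases hC.2.1 i j (Ne.symm hji) with h | h
    · exact absurd h (hno j hj0 hji)
    · simp [(hN j hj0).1, h, hj0, hji]
  simp only [hterm, Finset.sum_sub_distrib, Finset.sum_add_distrib, Finset.sum_ite_eq',
    Finset.mem_univ, if_true, Finset.sum_const, Finset.card_univ, Fintype.card_fin,
    nsmul_eq_mul, mul_one] at horth
  have : (2 : ℝ) < n := by exact_mod_cast hn
  linarith

theorem Complex.re_zpow_eq_eval_T {b : ℂ} (hb : ‖b‖ = 1) (n : ℤ) :
    (b ^ n).re = (T ℝ n).eval b.re := by
  have hexp : Complex.exp (b.arg * Complex.I) = b := by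
    simpa [hb] using Complex.norm_mul_exp_arg_mul_I b
  have hcos : Real.cos b.arg = b.re := by
    rw [Complex.cos_arg (by rintro rfl; simp at hb), hb, div_one]
  conv_lhs => rw [← hexp, ← Complex.exp_int_mul, ← mul_assoc]
  rw [← hcos, T_real_cos]
  exact_mod_cast Complex.exp_ofReal_mul_I_re _

theorem sq_ne_zpow_of_re_bounds {a b : ℂ} (ha : ‖a‖ = 1) (hb : ‖b‖ = 1) (ha₀ : 0 < a.re)
    (ha₁ : a.re ≤ 1 / 4) (hb₀ : b.re < 0) (hb₁ : -(1 / 2) ≤ b.re) (hab : a.re < -b.re)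
    {e : ℤ} (he : |e| ≤ 4) : a ^ 2 ≠ b ^ e := by
  intro h
  have hre := congrArg Complex.re h
  rw [← zpow_natCast, Complex.re_zpow_eq_eval_T ha, Complex.re_zpow_eq_eval_T hb,
    ← T_natAbs ℝ e] at hre
  have hk : e.natAbs ≤ 4 := by rw [abs_le] at he; omega
  generalize e.natAbs = k at hk hre
  have hT3 : T ℝ 3 = 2 * X * T ℝ 2 - T ℝ 1 := T_add_two ℝ 1
  have hT4 : T ℝ 4 = 2 * X * T ℝ 3 - T ℝ 2 := T_add_two ℝ 2
  have hb₂ : b.re ^ 2 ≤ 1 / 4 := by nlinarith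
  -- the product hint gives `T 4 (b.re) ≥ -1/2`, since `T 4 = 2 T 2 ^ 2 - 1`
  interval_cases k <;>
    simp only [Nat.cast_zero, Nat.cast_one, Nat.cast_ofNat, T_zero, T_one, T_two, hT3, hT4,
      eval_one, eval_X, eval_sub, eval_mul, eval_pow, eval_ofNat] at hre <;>
    nlinarith [mul_nonneg (sub_nonneg.2 hb₂) (by linarith : (0 : ℝ) ≤ 3 / 4 - b.re ^ 2)]

theorem sq_ne_zpow_of_re_eq {t : ℝ} (ht : 2 ≤ t) {a b : ℂ} (ha : ‖a‖ = 1) (hb : ‖b‖ = 1)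
    (hare : a.re = (-1 + √(4 * t + 1)) / (4 * t)) (hbre : b.re = (-1 - √(4 * t + 1)) / (4 * t))
    {e : ℤ} (he : |e| ≤ 4) : a ^ 2 ≠ b ^ e := by
  have hs : √(4 * t + 1) ^ 2 = 4 * t + 1 := Real.sq_sqrt (by linarith)
  have hs₃ : 3 ≤ √(4 * t + 1) := by nlinarith [Real.sqrt_nonneg (4 * t + 1)]
  have ht₀ : 0 < 4 * t := by linarith
  refine sq_ne_zpow_of_re_bounds ha hb ?_ ?_ ?_ ?_ ?_ he <;> simp only [hare, hbre]
  · exact div_pos (by linarith) ht₀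
  · rw [div_le_iff₀ ht₀]; nlinarith
  · exact div_neg_of_neg_of_pos (by linarith) ht₀
  · rw [le_div_iff₀ ht₀]; nlinarith
  · rw [← neg_div]; exact div_lt_div_of_pos_right (by linarith) ht₀

theorem stmt8 (m : ℕ) (hm : 2 ≤ m)
    (C : Matrix (Fin (4 * m + 2)) (Fin (4 * m + 2)) ℝ)
    (hconf : IsConference C) (hnorm : IsNormalizedConf C) (hsym : C.transpose = C)
    (cA cB : ℂ) (hcAabs : ‖cA‖ = 1) (hcBabs : ‖cB‖ = 1)
    (hcAre : cA.re = (-1 + Real.sqrt (4 * m + 1)) / (4 * m))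
    (hcBre : cB.re = (-1 - Real.sqrt (4 * m + 1)) / (4 * m)) :
    ¬ HadEquiv
      (Matrix.of fun i j : Fin (4 * m + 1) =>
        if i = j then (1 : ℂ)
        else if C i.succ j.succ = 1 then cA else (starRingEnd ℂ) cA)
      (Matrix.of fun i j : Fin (4 * m + 1) =>
        if i = j then (1 : ℂ)
        else if C i.succ j.succ = 1 then cB else (starRingEnd ℂ) cB) := by
  intro hequiv
  change HadEquiv (confPhaseMatrix (C.submatrix Fin.succ Fin.succ) cA)
    (confPhaseMatrix (C.submatrix Fin.succ Fin.succ) cB) at hequiv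
  obtain ⟨j, hj₀, hj₁, hCj⟩ := hconf.exists_apply_eq_one hnorm (by omega) (Fin.succ_ne_zero 0)
  obtain ⟨j, rfl⟩ := Fin.exists_succ_eq.2 hj₀
  have hmem := sq_mem_haagerupSet_confPhaseMatrix (C.submatrix Fin.succ Fin.succ) (c := cA)
    (i := 0) (j := j) (fun h => hj₁ (by rw [h])) hCj (by rw [← hsym]; exact hCj)
  obtain ⟨e, he, heq⟩ :=
    haagerupSet_confPhaseMatrix_subset _ hcBabs (hequiv.haagerupSet_subset hmem)
  exact sq_ne_zpow_of_re_eq (by exact_mod_cast hm) hcAabs hcBabs hcAre hcBre he heq
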